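/- Let l ≥ 0 and let χ be a partial coloring of the linearly ordered set {0, 1, …, 2^l − 1} using colors from a set C (some elements may be uncolored), with the property that for every pair of indices i ≤ j there exists x with i ≤ x ≤ j such that x is colored and its color is assigned to no other colored element y with i ≤ y ≤ j. Then χ uses at least l + 1 distinct colors, i.e., |C| ≥ l + 1 if every color of C actually occurs (equivalently, the number of distinct colors appearing in χ is at least l + 1). -/

import Mathlib

/-!
Let `x` be a uniquely coloured element of the whole interval. Removing `x` leaves two
subintervals, one of which has at least half of the remaining `2 ^ l - 1` elements, hence at
least `2 ^ (l - 1)` of them; by induction it sees `l` colours, none of which is the colour of `x`.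
-/

section Coloring

variable {α C : Type*}

def IsUniquelyColored (χ : α → Option C) (s : Set α) (x : α) : Prop :=
  x ∈ s ∧ (χ x).isSome ∧ ∀ y ∈ s, χ y = χ x → y = x

def colorsOn (χ : α → Option C) (s : Set α) : Set C :=
  {c | ∃ x ∈ s, χ x = some c}

theorem colorsOn_mono (χ : α → Option C) {s t : Set α} (h : t ⊆ s) :
    colorsOn χ t ⊆ colorsOn χ s :=
  fun _ ⟨x, hx, hc⟩ => ⟨x, h hx, hc⟩

theorem Set.Finite.colorsOn (χ : α → Option C) {s : Set α} (hs : s.Finite) :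
    (colorsOn χ s).Finite :=
  (hs.image χ).preimage (Option.some_injective C).injOn |>.subset
    fun _ ⟨x, hx, hc⟩ => ⟨x, hx, hc⟩

theorem ncard_colorsOn_lt {χ : α → Option C} {s t : Set α} {x : α} (hs : s.Finite)
    (hx : IsUniquelyColored χ s x) (hts : t ⊆ s) (hxt : x ∉ t) :
    (colorsOn χ t).ncard < (colorsOn χ s).ncard := by
  obtain ⟨hxs, hsome, huniq⟩ := hx
  obtain ⟨c, hc⟩ := Option.isSome_iff_exists.mp hsome
  refine Set.ncard_lt_ncard ?_ (hs.colorsOn χ)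
  refine (Set.ssubset_iff_of_subset (colorsOn_mono χ hts)).mpr ⟨c, ⟨x, hxs, hc⟩, ?_⟩
  rintro ⟨y, hyt, hy⟩
  exact hxt (huniq y (hts hyt) (hy.trans hc.symm) ▸ hyt)

variable [LinearOrder α]

theorem Finset.exists_ordConnected_subset_notMem {s : Finset α}
    (hs : (s : Set α).OrdConnected) (x : α) :
    ∃ t ⊆ s, x ∉ t ∧ (t : Set α).OrdConnected ∧ s.card ≤ 2 * t.card + 1 := by
  set L := s.filter (· < x)
  set R := s.filter (x < ·)
  have hL : (L : Set α).OrdConnected := by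
    rw [Finset.coe_filter]; exact hs.inter Set.ordConnected_Iio
  have hR : (R : Set α).OrdConnected := by
    rw [Finset.coe_filter]; exact hs.inter Set.ordConnected_Ioi
  have hcard : s.card ≤ L.card + R.card + 1 :=
    calc s.card ≤ (insert x (L ∪ R)).card := Finset.card_le_card fun y hy => by
            rcases lt_trichotomy y x with h | h | h <;> simp_all [L, R]
      _ ≤ L.card + R.card + 1 := (Finset.card_insert_le _ _).trans
            (Nat.add_le_add_right (Finset.card_union_le _ _) 1)
  rcases le_total R.card L.card with h | h
  · exact ⟨L, Finset.filter_subset _ _, by simp [L], hL, by omega⟩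
  · exact ⟨R, Finset.filter_subset _ _, by simp [R], hR, by omega⟩

theorem le_ncard_colorsOn {χ : α → Option C}
    (hχ : ∀ i j, i ≤ j → ∃ x, IsUniquelyColored χ (Set.Icc i j) x) (l : ℕ) :
    ∀ s : Finset α, (s : Set α).OrdConnected → 2 ^ l ≤ s.card →
      l + 1 ≤ (colorsOn χ s).ncard := by
  have exists_isUniquelyColored : ∀ s : Finset α, (s : Set α).OrdConnected → s.Nonempty →
      ∃ x, IsUniquelyColored χ s x := fun s hs hne => by
    have hIcc : (s : Set α) = Set.Icc (s.min' hne) (s.max' hne) :=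
      Set.Subset.antisymm (fun _ hy => ⟨s.min'_le _ hy, s.le_max' _ hy⟩)
        (hs.out (s.min'_mem hne) (s.max'_mem hne))
    exact hIcc ▸ hχ _ _ (s.min'_le _ (s.max'_mem hne))
  induction l with
  | zero =>
    intro s hs hcard
    obtain ⟨x, hx⟩ := exists_isUniquelyColored s hs (Finset.card_pos.mp hcard)
    have := ncard_colorsOn_lt s.finite_toSet hx (Set.empty_subset _) (Set.notMem_empty x)
    omega
  | succ l ih =>
    intro s hs hcard
    have hne : s.Nonempty := Finset.card_pos.mp (lt_of_lt_of_le (by positivity) hcard)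
    obtain ⟨x, hx⟩ := exists_isUniquelyColored s hs hne
    obtain ⟨t, hts, hxt, ht, hst⟩ := Finset.exists_ordConnected_subset_notMem hs x
    have := ih t ht (by rw [pow_succ] at hcard; omega)
    have := ncard_colorsOn_lt s.finite_toSet hx (by exact_mod_cast hts) (by exact_mod_cast hxt)
    omega

end Coloring

theorem stmt1 {C : Type*} (l : ℕ) (χ : Fin (2 ^ l) → Option C)
    (h : ∀ i j : Fin (2 ^ l), i ≤ j →
      ∃ x : Fin (2 ^ l), i ≤ x ∧ x ≤ j ∧ (χ x).isSome ∧
        ∀ y : Fin (2 ^ l), i ≤ y → y ≤ j → χ y = χ x → y = x) :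
    l + 1 ≤ {c : C | ∃ x : Fin (2 ^ l), χ x = some c}.ncard := by
  have hχ : ∀ i j, i ≤ j → ∃ x, IsUniquelyColored χ (Set.Icc i j) x := fun i j hij => by
    obtain ⟨x, hix, hxj, hx, huniq⟩ := h i j hij
    exact ⟨x, ⟨hix, hxj⟩, hx, fun y hy => huniq y hy.1 hy.2⟩
  simpa [colorsOn] using
    le_ncard_colorsOn hχ l Finset.univ (by simpa using Set.ordConnected_univ) (by simp)
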